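/- arXiv:math/0603168 — 4 statements merged into one kernel-verified Lean document; each statement's English description precedes it below -/
import Mathlib

section
/- Let G be a countable discrete group and suppose there exist elements g₁, g₂, …, g_n ∈ G such that ‖λ(g₁) + λ(g₂) + ⋯ + λ(g_n)‖ / n < 1, where λ is the left regular representation of G on ℓ²(G) and ‖·‖ is the operator norm on B(ℓ²(G)). Then G is not amenable. -/
/-!
An invariant mean on `ℓ∞(G)` yields Reiter's condition: the translation defects
`(g_i · f - f)_i` of probability vectors `f ∈ ℓ¹(G)` come arbitrarily close to `0`. Otherwise
Hahn–Banach separates `0` from them by a functional `L`, and the bounded functions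
`φ_i x = L(δ_x in slot i)` satisfy `∑ i, (φ_i(g_i x) - φ_i x) > u > 0` for every `x`, while
the mean of the left side is `0`. Square roots turn such `f` into almost invariant unit vectors of
`ℓ²(G)`, because `(√a - √b)² ≤ |a - b|`, and testing `∑ λ(g_i)` on them gives
`‖∑ λ(g_i)‖ ≥ n`.
-/

open scoped BigOperators ENNReal

variable {G : Type*} [Group G]

/-- ℓ²(G) with complex coefficients. -/
abbrev L2 (G : Type*) : Type _ := lp (fun _ : G => ℂ) 2

lemma memℓp_translate (g : G) (f : L2 G) : Memℓp (fun h => f (g⁻¹ * h)) 2 := by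
  apply memℓp_gen
  have h2 : (0:ℝ) < (2 : ℝ≥0∞).toReal := by norm_num
  have := (memℓp_gen_iff h2).1 (lp.memℓp f)
  exact ((Equiv.mulLeft g⁻¹).summable_iff
    (f := fun h => ‖f h‖ ^ (2 : ℝ≥0∞).toReal)).2 this

/-- The left regular representation of `G` on `ℓ²(G)`, as a linear isometry equivalence. -/
noncomputable def lamEquiv (g : G) : L2 G ≃ₗᵢ[ℂ] L2 G where
  toFun f := ⟨fun h => f (g⁻¹ * h), memℓp_translate g f⟩
  invFun f := ⟨fun h => f (g * h), by
    have := memℓp_translate g⁻¹ f; simp only [inv_inv] at this; exact this⟩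
  map_add' f₁ f₂ := by ext h; simp [lp.coeFn_add]; rfl
  map_smul' c f := by ext h; simp [lp.coeFn_smul]
  left_inv f := by ext h; simp
  right_inv f := by ext h; simp
  norm_map' f := by
    have h2 : (0:ℝ) < (2 : ℝ≥0∞).toReal := by norm_num
    rw [lp.norm_eq_tsum_rpow h2, lp.norm_eq_tsum_rpow h2]
    congr 1
    exact ((Equiv.mulLeft g⁻¹).tsum_eq
      (f := fun h => ‖f h‖ ^ (2 : ℝ≥0∞).toReal))

/-- The left regular representation as bounded operators. -/
noncomputable def lam (g : G) : L2 G →L[ℂ] L2 G :=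
  (lamEquiv g).toContinuousLinearEquiv.toContinuousLinearMap

/-- δ_g, the canonical basis vector of ℓ²(G). -/
noncomputable def delta (g : G) : L2 G :=
  haveI := Classical.decEq G
  lp.single 2 g (1 : ℂ)

/-- The closed subspace spanned by the δ_w, w ∈ S. -/
noncomputable def spanH (S : Set G) : Submodule ℂ (L2 G) :=
  (Submodule.span ℂ (delta '' S)).topologicalClosure

/-- Orthogonal projection onto the closed span of {δ_w : w ∈ S}, as an operator on ℓ²(G). -/
noncomputable def projH (S : Set G) : L2 G →L[ℂ] L2 G :=
  haveI : CompleteSpace (spanH S) :=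
    (Submodule.isClosed_topologicalClosure _).completeSpace_coe
  (spanH S).subtypeL.comp ((spanH S).orthogonalProjectionOnto)

/-- Left translation of a bounded function on `G` by `g`: `(g·f)(h) = f(g⁻¹h)`. -/
noncomputable def translateInfty (g : G) (f : lp (fun _ : G => ℝ) ∞) :
    lp (fun _ : G => ℝ) ∞ :=
  ⟨fun h => f (g⁻¹ * h), by
    apply memℓp_infty
    refine (memℓp_infty_iff.1 (lp.memℓp f)).mono ?_
    rintro x ⟨h, rfl⟩
    exact ⟨g⁻¹ * h, rfl⟩⟩

/-- A discrete group `G` is amenable if there is a left-invariant mean on `ℓ∞(G)`: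
a linear functional which is positive, normalized at the constant function `1`,
and invariant under left translation. -/
def IsAmenable (G : Type*) [Group G] : Prop :=
  ∃ m : lp (fun _ : G => ℝ) ∞ →ₗ[ℝ] ℝ,
    (∀ f : lp (fun _ : G => ℝ) ∞, (∀ x : G, 0 ≤ f x) → 0 ≤ m f) ∧
    m 1 = 1 ∧
    ∀ (g : G) (f : lp (fun _ : G => ℝ) ∞), m (translateInfty g f) = m f

section

variable {α ι : Type*}

abbrev L1 (G : Type*) : Type _ := lp (fun _ : G => ℝ) 1

lemma L1.norm_eq_tsum (f : L1 α) : ‖f‖ = ∑' x, ‖f x‖ := by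
  simpa using lp.norm_rpow_eq_tsum (by norm_num : (0 : ℝ) < (1 : ℝ≥0∞).toReal) f

lemma L1.summable_norm (f : L1 α) : Summable fun x => ‖f x‖ := by
  simpa using (lp.memℓp f).summable (by norm_num : (0 : ℝ) < (1 : ℝ≥0∞).toReal)

lemma L2.norm_sq_eq_tsum (u : L2 α) : ‖u‖ ^ 2 = ∑' x, ‖u x‖ ^ 2 := by
  simpa using lp.norm_rpow_eq_tsum (by norm_num : (0 : ℝ) < (2 : ℝ≥0∞).toReal) u

lemma memℓp_one_translate (g : G) (f : L1 G) : Memℓp (fun h => f (g⁻¹ * h)) 1 :=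
  memℓp_gen <| (Equiv.mulLeft g⁻¹).summable_iff.2 <|
    (memℓp_gen_iff (by norm_num : (0 : ℝ) < (1 : ℝ≥0∞).toReal)).1 (lp.memℓp f)

noncomputable def translate1 (g : G) : L1 G ≃ₗᵢ[ℝ] L1 G where
  toFun f := ⟨fun h => f (g⁻¹ * h), memℓp_one_translate g f⟩
  invFun f :=
    ⟨fun h => f (g * h), (by simpa using memℓp_one_translate g⁻¹ f : Memℓp _ 1)⟩
  map_add' f₁ f₂ := rfl
  map_smul' c f := rfl
  left_inv f := by ext h; simp
  right_inv f := by ext h; simp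
  norm_map' f := by
    simp only [L1.norm_eq_tsum]
    exact (Equiv.mulLeft g⁻¹).tsum_eq fun h => ‖f h‖

@[simp] lemma translate1_apply (g : G) (f : L1 G) (h : G) : translate1 g f h = f (g⁻¹ * h) := rfl

lemma translate1_single [DecidableEq G] (g x : G) :
    translate1 g (lp.single 1 x 1) = lp.single 1 (g * x) 1 := by
  ext y
  simp only [translate1_apply, lp.single_apply, Pi.single_apply, inv_mul_eq_iff_eq_mul]

def probabilityVectors (G : Type*) : Set (L1 G) := {f | (∀ x, 0 ≤ f x) ∧ ∑' x, f x = 1}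

lemma single_mem_probabilityVectors [DecidableEq α] (x : α) :
    lp.single 1 x 1 ∈ probabilityVectors α := by
  refine ⟨fun y => ?_, ?_⟩
  · rw [lp.single_apply, Pi.single_apply]; split_ifs <;> norm_num
  · rw [tsum_eq_single x fun y hy => lp.single_apply_ne 1 x _ hy, lp.single_apply_self]

lemma convex_probabilityVectors : Convex ℝ (probabilityVectors α) := by
  rintro f ⟨hf₀, hf₁⟩ f' ⟨hf'₀, hf'₁⟩ a b ha hb hab
  have hf := (L1.summable_norm f).of_norm
  have hf' := (L1.summable_norm f').of_norm
  refine ⟨fun x => ?_, ?_⟩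
  · simp only [lp.coeFn_add, lp.coeFn_smul, Pi.add_apply, Pi.smul_apply, smul_eq_mul]
    have := hf₀ x; have := hf'₀ x; positivity
  · simp only [lp.coeFn_add, lp.coeFn_smul, Pi.add_apply, Pi.smul_apply, smul_eq_mul]
    rw [(hf.mul_left a).tsum_add (hf'.mul_left b), tsum_mul_left, tsum_mul_left, hf₁, hf'₁,
      mul_one, mul_one, hab]

lemma IsAmenable.exists_sum_sub_lt (hG : IsAmenable G) [Fintype ι] (g : ι → G)
    {φ : ι → G → ℝ} (hφ : ∀ i, Memℓp (φ i) ∞) {u : ℝ} (hu : 0 < u) :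
    ∃ x, ∑ i, (φ i (g i * x) - φ i x) < u := by
  obtain ⟨m, hm_pos, hm_one, hm_inv⟩ := hG
  by_contra! hφu
  let Φ : ι → lp (fun _ : G => ℝ) ∞ := fun i => ⟨φ i, hφ i⟩
  let ψ := ∑ i, (translateInfty (g i)⁻¹ (Φ i) - Φ i)
  have hψ : ∀ x, ψ x = ∑ i, (φ i (g i * x) - φ i x) := fun x => by
    simp only [ψ, lp.coeFn_sum, Finset.sum_apply, lp.coeFn_sub, Pi.sub_apply]
    simp [translateInfty, Φ]
  have hmψ : m ψ = 0 := by
    simp only [ψ, map_sum, map_sub, hm_inv, sub_self, Finset.sum_const_zero]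
  have := hm_pos (ψ - u • 1) fun x => by
    have h1 : (1 : lp (fun _ : G => ℝ) ∞) x = 1 := rfl
    simp only [lp.coeFn_sub, lp.coeFn_smul, Pi.sub_apply, Pi.smul_apply, h1, hψ, smul_eq_mul,
      mul_one, sub_nonneg]
    exact hφu x
  rw [map_sub, map_smul, hmψ, hm_one] at this
  simp only [smul_eq_mul, mul_one, zero_sub, Left.nonneg_neg_iff] at this
  linarith

noncomputable def reiterDefect [Fintype ι] (g : ι → G) : L1 G →L[ℝ] (ι → L1 G) :=
  ContinuousLinearMap.pi fun i =>
    ((translate1 (g i)).toContinuousLinearEquiv : L1 G →L[ℝ] L1 G) - .id ℝ _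

lemma reiterDefect_apply [Fintype ι] (g : ι → G) (f : L1 G) (i : ι) :
    reiterDefect g f i = translate1 (g i) f - f := rfl

lemma IsAmenable.zero_mem_closure_reiterDefect_image (hG : IsAmenable G) [Fintype ι]
    (g : ι → G) : 0 ∈ closure (reiterDefect g '' probabilityVectors G) := by
  classical
  by_contra h0
  obtain ⟨L, u, hLu, hL⟩ := geometric_hahn_banach_point_closed
    ((convex_probabilityVectors.linear_image (reiterDefect g).toLinearMap).closure)
    isClosed_closure h0
  let φ : ι → G → ℝ := fun i x => L (Pi.single i (lp.single 1 x 1))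
  have hφ : ∀ i, Memℓp (φ i) ∞ := fun i => memℓp_infty ⟨‖L‖, by
    rintro _ ⟨x, rfl⟩
    refine (L.le_opNorm _).trans_eq ?_
    rw [Pi.norm_single, lp.norm_single (by norm_num), norm_one, mul_one]⟩
  obtain ⟨x, hx⟩ := hG.exists_sum_sub_lt g hφ (by simpa using hLu)
  have hLx : L (reiterDefect g (lp.single 1 x 1)) = ∑ i, (φ i (g i * x) - φ i x) := by
    conv_lhs => rw [← Finset.univ_sum_single (reiterDefect g _), map_sum]
    simp only [φ, reiterDefect_apply, translate1_single, Pi.single_sub, map_sub]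
  exact (hL _ (subset_closure ⟨_, single_mem_probabilityVectors x, rfl⟩)).not_gt (hLx ▸ hx)

lemma IsAmenable.exists_almost_invariant_probabilityVector (hG : IsAmenable G) [Fintype ι]
    (g : ι → G) {ε : ℝ} (hε : 0 < ε) :
    ∃ f ∈ probabilityVectors G, ∀ i, ‖translate1 (g i) f - f‖ < ε := by
  obtain ⟨_, ⟨f, hf, rfl⟩, hfε⟩ :=
    Metric.mem_closure_iff.1 (hG.zero_mem_closure_reiterDefect_image g) ε hε
  rw [dist_zero_left] at hfε
  exact ⟨f, hf, fun i => (norm_le_pi_norm (reiterDefect g f) i).trans_lt hfε⟩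

lemma Real.sq_sqrt_sub_sqrt_le_abs_sub {a b : ℝ} (ha : 0 ≤ a) (hb : 0 ≤ b) :
    (√a - √b) ^ 2 ≤ |a - b| := by
  have hsum : |√a - √b| ≤ √a + √b :=
    abs_le.2 ⟨by linarith [Real.sqrt_nonneg a], by linarith [Real.sqrt_nonneg b]⟩
  calc (√a - √b) ^ 2 = |√a - √b| * |√a - √b| := by rw [abs_mul_abs_self, sq]
    _ ≤ |√a - √b| * (√a + √b) := mul_le_mul_of_nonneg_left hsum (abs_nonneg _)
    _ = |a - b| := by
      rw [← abs_of_nonneg (add_nonneg (Real.sqrt_nonneg a) (Real.sqrt_nonneg b)), ← abs_mul,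
        mul_comm, ← sq_sub_sq, Real.sq_sqrt ha, Real.sq_sqrt hb]

lemma memℓp_two_sqrt (f : L1 α) : Memℓp (fun x => ((√(f x) : ℝ) : ℂ)) 2 := by
  refine memℓp_gen ((L1.summable_norm f).of_nonneg_of_le (fun x => by positivity) fun x => ?_)
  simp only [Complex.norm_real, Real.norm_eq_abs, ENNReal.toReal_ofNat, Real.rpow_two, sq_abs,
    Real.sq_sqrt', le_abs_self, max_le_iff, abs_nonneg, and_self]

noncomputable def sqrtL2 (f : L1 α) : L2 α := ⟨_, memℓp_two_sqrt f⟩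

lemma sqrtL2_apply (f : L1 α) (x : α) : sqrtL2 f x = ((√(f x) : ℝ) : ℂ) := rfl

lemma lam_sqrtL2 (g : G) (f : L1 G) : lam g (sqrtL2 f) = sqrtL2 (translate1 g f) := rfl

lemma norm_sqrtL2_sq {f : L1 α} (hf : ∀ x, 0 ≤ f x) : ‖sqrtL2 f‖ ^ 2 = ∑' x, f x := by
  simp only [L2.norm_sq_eq_tsum, sqrtL2_apply, Complex.norm_real, Real.norm_eq_abs, sq_abs,
    Real.sq_sqrt (hf _)]

lemma norm_sqrtL2_sub_sq_le {f f' : L1 α} (hf : ∀ x, 0 ≤ f x)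
    (hf' : ∀ x, 0 ≤ f' x) : ‖sqrtL2 f - sqrtL2 f'‖ ^ 2 ≤ ‖f - f'‖ := by
  rw [L2.norm_sq_eq_tsum, L1.norm_eq_tsum]
  have hsum : Summable fun x => ‖(sqrtL2 f - sqrtL2 f') x‖ ^ 2 := by
    simpa using (lp.memℓp (sqrtL2 f - sqrtL2 f')).summable (by norm_num)
  refine Summable.tsum_le_tsum (fun x => ?_) hsum (L1.summable_norm _)
  simp only [lp.coeFn_sub, Pi.sub_apply, sqrtL2_apply, ← Complex.ofReal_sub, Complex.norm_real,
    Real.norm_eq_abs, sq_abs]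
  exact Real.sq_sqrt_sub_sqrt_le_abs_sub (hf x) (hf' x)

lemma IsAmenable.exists_almost_invariant_unit_vector (hG : IsAmenable G) [Fintype ι]
    (g : ι → G) {ε : ℝ} (hε : 0 < ε) :
    ∃ u : L2 G, ‖u‖ = 1 ∧ ∀ i, ‖lam (g i) u - u‖ < ε := by
  obtain ⟨f, ⟨hf₀, hf₁⟩, hf⟩ :=
    hG.exists_almost_invariant_probabilityVector g (pow_pos hε 2)
  refine ⟨sqrtL2 f, ?_, fun i => ?_⟩
  · rw [← pow_eq_one_iff_of_nonneg (norm_nonneg _) two_ne_zero, norm_sqrtL2_sq hf₀, hf₁]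
  · refine lt_of_pow_lt_pow_left₀ 2 hε.le ?_
    rw [lam_sqrtL2]
    exact (norm_sqrtL2_sub_sq_le (f := translate1 (g i) f) (fun _ => hf₀ _) hf₀).trans_lt (hf i)

lemma card_mul_norm_le_norm_sum_add {E : Type*} [NormedAddCommGroup E] [NormedSpace ℝ E]
    [Fintype ι] (v : ι → E) (u : E) :
    (Fintype.card ι : ℝ) * ‖u‖ ≤ ‖∑ i, v i‖ + ∑ i, ‖v i - u‖ :=
  calc (Fintype.card ι : ℝ) * ‖u‖ = ‖∑ _i : ι, u‖ := by
        rw [Finset.sum_const, RCLike.norm_nsmul ℝ, nsmul_eq_mul, Finset.card_univ]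
    _ = ‖∑ i, v i - ∑ i, (v i - u)‖ := by rw [Finset.sum_sub_distrib, sub_sub_cancel]
    _ ≤ ‖∑ i, v i‖ + ‖∑ i, (v i - u)‖ := norm_sub_le _ _
    _ ≤ ‖∑ i, v i‖ + ∑ i, ‖v i - u‖ := add_le_add_right (norm_sum_le _ _) _

theorem IsAmenable.card_le_norm_sum_lam (hG : IsAmenable G) [Fintype ι]
    (g : ι → G) : (Fintype.card ι : ℝ) ≤ ‖∑ i, lam (g i)‖ := by
  refine le_of_forall_pos_lt_add fun ε hε => ?_
  set N : ℝ := (Fintype.card ι : ℝ)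
  have hN : 0 ≤ N := Nat.cast_nonneg _
  obtain ⟨u, hu, hgu⟩ :=
    hG.exists_almost_invariant_unit_vector g (div_pos hε (by linarith : 0 < N + 1))
  calc N = N * ‖u‖ := by rw [hu, mul_one]
    _ ≤ ‖∑ i, lam (g i) u‖ + ∑ i, ‖lam (g i) u - u‖ :=
      card_mul_norm_le_norm_sum_add _ u
    _ ≤ ‖∑ i, lam (g i)‖ + N * (ε / (N + 1)) := by
      gcongr
      · simpa [hu, _root_.sum_apply] using (∑ i, lam (g i)).le_opNorm u
      · refine (Finset.sum_le_card_nsmul _ _ _ fun i _ => (hgu i).le).trans_eq ?_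
        rw [Finset.card_univ, nsmul_eq_mul]
    _ < ‖∑ i, lam (g i)‖ + ε := by
      gcongr
      rw [mul_div_assoc', div_lt_iff₀ (by linarith)]
      nlinarith

end

theorem statement6_general {G : Type*} [Group G] (n : ℕ) (hn : 0 < n)
    (g : Fin n → G) (h : ‖∑ i : Fin n, lam (g i)‖ / (n : ℝ) < 1) :
    ¬ IsAmenable G := fun hG => by
  have hcard := hG.card_le_norm_sum_lam g
  rw [Fintype.card_fin] at hcard
  rw [div_lt_one (Nat.cast_pos.2 hn)] at h
  exact hcard.not_gt h

/-- if for some `g₁, …, gₙ` in a countable discrete group `G` one has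
`‖λ(g₁) + ⋯ + λ(gₙ)‖/n < 1`, then `G` is not amenable. -/
theorem statement6 {G : Type*} [Group G] [Countable G] (n : ℕ) (hn : 0 < n)
    (g : Fin n → G) (h : ‖∑ i : Fin n, lam (g i)‖ / (n : ℝ) < 1) :
    ¬ IsAmenable G :=
  statement6_general n hn g h
end

section
/- Let w₁ and w₂ be two distinct elements of Thompson's group F. Then there exists at most one pair (i, j) of positive integers such that x₀ⁱ x₁ x₀⁻ⁱ w₁ = x₀ʲ x₁ x₀⁻ʲ w₂; that is, if positive integers (i, j) and (k, l) both satisfy x₀ⁱ x₁ x₀⁻ⁱ w₁ = x₀ʲ x₁ x₀⁻ʲ w₂ and x₀ᵏ x₁ x₀⁻ᵏ w₁ = x₀ˡ x₁ x₀⁻ˡ w₂, then i = k and j = l. -/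
open scoped BigOperators

open scoped commutatorElement in
/-- The two relators of the finite presentation of Thompson's group `F`:
`[x₀x₁⁻¹, x₀⁻¹x₁x₀]` and `[x₀x₁⁻¹, x₀⁻²x₁x₀²]`. -/
def thompsonRels : Set (FreeGroup (Fin 2)) :=
  { ⁅FreeGroup.of (0 : Fin 2) * (FreeGroup.of (1 : Fin 2))⁻¹,
      (FreeGroup.of (0 : Fin 2))⁻¹ * FreeGroup.of (1 : Fin 2) * FreeGroup.of (0 : Fin 2)⁆,
    ⁅FreeGroup.of (0 : Fin 2) * (FreeGroup.of (1 : Fin 2))⁻¹,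
      (FreeGroup.of (0 : Fin 2))⁻¹ ^ 2 * FreeGroup.of (1 : Fin 2) * FreeGroup.of (0 : Fin 2) ^ 2⁆ }

/-- Thompson's group `F`, as a presented group. -/
abbrev ThompsonF : Type := PresentedGroup thompsonRels

/-- The generator `x₀`. -/
def x₀ : ThompsonF := PresentedGroup.of 0

/-- The generator `x₁`. -/
def x₁ : ThompsonF := PresentedGroup.of 1

/-- The canonical projection from the free group on `x₀, x₁` to Thompson's group. -/
def toF : List (Fin 2 × Bool) → ThompsonF := fun l =>
  PresentedGroup.mk thompsonRels (FreeGroup.mk l)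

/-- The word representing `x_g^z` (`g = 0` or `1`), as a list of letters. -/
def powWord (g : Fin 2) (z : ℤ) : List (Fin 2 × Bool) :=
  List.replicate z.natAbs (g, decide (0 < z))

/-- A word is reduced if it equals the reduced word of the free-group element
it represents. -/
def Reduced (l : List (Fin 2 × Bool)) : Prop :=
  (FreeGroup.mk l).toWord = l

/-- The forbidden subwords of Guba–Sapir: `x₁^{±1} x₀^i x₁` (`i > 0`) and
`x₁^{±1} x₀^{i+1} x₁⁻¹` (`i > 0`). -/
def ForbiddenWord (w : List (Fin 2 × Bool)) : Prop :=
  ∃ (s : Bool) (i : ℕ), 0 < i ∧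
    (w = (1, s) :: (List.replicate i ((0 : Fin 2), true) ++ [((1 : Fin 2), true)]) ∨
     w = (1, s) :: (List.replicate (i + 1) ((0 : Fin 2), true) ++ [((1 : Fin 2), false)]))

/-- A word is a (Guba–Sapir) normal form if it is reduced and contains no
forbidden subword. -/
def IsNormalForm (l : List (Fin 2 × Bool)) : Prop :=
  Reduced l ∧ ∀ w, w <:+: l → ¬ ForbiddenWord w

/-- `w` is the element of `F` whose normal form begins with the prefix `pre`. -/
def NFBeginsWith (w : ThompsonF) (pre : List (Fin 2 × Bool)) : Prop :=
  ∃ l, IsNormalForm l ∧ toF l = w ∧ pre <+: l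

/-- `F₁ = {x₀^k : k ≥ 0}`. -/
def SetF₁ : Set ThompsonF := {w | ∃ k : ℕ, w = x₀ ^ k}

/-- `F₂`: normal form begins with `x₀^k x₁^l`, `k > 0`, `l ≠ 0`. -/
def SetF₂ : Set ThompsonF :=
  {w | ∃ (k l : ℤ), 0 < k ∧ l ≠ 0 ∧ NFBeginsWith w (powWord 0 k ++ powWord 1 l)}

/-- `F₃`: normal form begins with `x₀^{-k} x₁^l`, `k > 0`, `l ∈ ℤ`. -/
def SetF₃ : Set ThompsonF :=
  {w | ∃ (k l : ℤ), 0 < k ∧ NFBeginsWith w (powWord 0 (-k) ++ powWord 1 l)}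

/-- `F₄`: normal form begins with `x₁^k`, `k > 0`. -/
def SetF₄ : Set ThompsonF :=
  {w | ∃ k : ℤ, 0 < k ∧ NFBeginsWith w (powWord 1 k)}

/-- `F₅`: normal form begins with `x₁^{-k}`, `k > 0`. -/
def SetF₅ : Set ThompsonF :=
  {w | ∃ k : ℤ, 0 < k ∧ NFBeginsWith w (powWord 1 (-k))}

/-!
Write `g a = x₀ ^ a * x₁ * x₀ ^ (-a)`. The two equations give
`(g j)⁻¹ * g i = w₂ * w₁⁻¹ = (g l)⁻¹ * g k`, and `i ≠ j`, `k ≠ l` because `w₁ ≠ w₂`.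
Let `F` act on `ℝ` with `x₀` the translation `t ↦ t - 1` and `x₁` the piecewise linear map
with slopes `1, 1/2, 1` and breakpoints `0, 2`. For `a < b` the map `(g b)⁻¹ * g a` moves
exactly the points of `(-b, 2 - a)`, all of them upwards, while for `b < a` it moves no point
upwards. Hence the pair `(a, b)` can be read off from `(g b)⁻¹ * g a`.
-/

namespace ThompsonF

noncomputable def x₁Map (t : ℝ) : ℝ := if t ≤ 0 then t else if t ≤ 2 then t / 2 else t - 1

noncomputable def x₁MapInv (t : ℝ) : ℝ := if t ≤ 0 then t else if t ≤ 1 then 2 * t else t + 1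

noncomputable def x₁Perm : Equiv.Perm ℝ where
  toFun := x₁Map
  invFun := x₁MapInv
  left_inv t := by unfold x₁Map x₁MapInv; split_ifs <;> linarith
  right_inv t := by unfold x₁Map x₁MapInv; split_ifs <;> linarith

@[simp] lemma x₁Perm_apply (t : ℝ) : x₁Perm t = x₁Map t := rfl

@[simp] lemma x₁Perm_symm_apply (t : ℝ) : x₁Perm.symm t = x₁MapInv t := rfl

lemma lift_thompsonRels :
    ∀ r ∈ thompsonRels, FreeGroup.lift ![Equiv.addRight (-1 : ℝ), x₁Perm] r = 1 := by
  simp only [thompsonRels, Set.mem_insert_iff, Set.mem_singleton_iff, forall_eq_or_imp,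
    forall_eq, map_commutatorElement, commutatorElement_eq_one_iff_mul_comm, map_mul, map_inv,
    map_pow, FreeGroup.lift_apply_of, Matrix.cons_val_zero, Matrix.cons_val_one]
  constructor <;> ext t <;> simp [pow_two, x₁Map, x₁MapInv] <;> split_ifs <;> linarith

noncomputable def toPerm : ThompsonF →* Equiv.Perm ℝ := PresentedGroup.toGroup lift_thompsonRels

noncomputable def conjX₁ (a : ℝ) : Equiv.Perm ℝ :=
  Equiv.addRight (-a) * x₁Perm * Equiv.addRight a

lemma toPerm_x₀_zpow_mul_x₁_mul_x₀_zpow_neg (a : ℤ) :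
    toPerm (x₀ ^ a * x₁ * x₀ ^ (-a)) = conjX₁ a := by
  simp [toPerm, x₀, x₁, conjX₁, PresentedGroup.toGroup.of]

lemma toPerm_conj_inv_mul_conj (a b : ℤ) :
    toPerm ((x₀ ^ b * x₁ * x₀ ^ (-b))⁻¹ * (x₀ ^ a * x₁ * x₀ ^ (-a))) =
      (conjX₁ b)⁻¹ * conjX₁ a := by
  rw [map_mul, map_inv, toPerm_x₀_zpow_mul_x₁_mul_x₀_zpow_neg,
    toPerm_x₀_zpow_mul_x₁_mul_x₀_zpow_neg]

lemma conjX₁_inv_mul_conjX₁_apply (a b p : ℝ) :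
    ((conjX₁ b)⁻¹ * conjX₁ a) p = x₁MapInv (x₁Map (p + a) - a + b) - b := by
  simp [conjX₁, sub_eq_add_neg]

variable {a b c d : ℝ}

lemma lt_conjX₁_inv_mul_conjX₁_apply_iff (hab : a < b) (p : ℝ) :
    p < ((conjX₁ b)⁻¹ * conjX₁ a) p ↔ p ∈ Set.Ioo (-b) (2 - a) := by
  rw [conjX₁_inv_mul_conjX₁_apply, Set.mem_Ioo]
  unfold x₁Map x₁MapInv
  constructor <;> intro h <;> split_ifs at * <;> first | (constructor <;> linarith) | linarith

lemma conjX₁_inv_mul_conjX₁_apply_le (hba : b ≤ a) (p : ℝ) :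
    ((conjX₁ b)⁻¹ * conjX₁ a) p ≤ p := by
  rw [conjX₁_inv_mul_conjX₁_apply]
  unfold x₁Map x₁MapInv
  split_ifs <;> linarith

lemma eq_and_eq_of_conjX₁_inv_mul_conjX₁_eq_of_lt (hab : a < b) (hcd : c ≠ d)
    (h : (conjX₁ b)⁻¹ * conjX₁ a = (conjX₁ d)⁻¹ * conjX₁ c) : a = c ∧ b = d := by
  have hup (p : ℝ) : p ∈ Set.Ioo (-b) (2 - a) ↔ p < ((conjX₁ d)⁻¹ * conjX₁ c) p := by
    rw [← h, lt_conjX₁_inv_mul_conjX₁_apply_iff hab]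
  rcases hcd.lt_or_gt with hcd | hdc
  · have hI : Set.Ioo (-b) (2 - a) = Set.Ioo (-d) (2 - c) := by
      ext p
      rw [hup, lt_conjX₁_inv_mul_conjX₁_apply_iff hcd]
    obtain ⟨hdb, hac⟩ := (Set.Ioo_subset_Ioo_iff (by linarith)).1 hI.subset
    obtain ⟨hbd, hca⟩ := (Set.Ioo_subset_Ioo_iff (by linarith)).1 hI.superset
    constructor <;> linarith
  · obtain ⟨p, hp⟩ : (Set.Ioo (-b) (2 - a)).Nonempty := Set.nonempty_Ioo.2 (by linarith)
    exact absurd (conjX₁_inv_mul_conjX₁_apply_le hdc.le p) (not_le.2 ((hup p).1 hp))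

lemma eq_and_eq_of_conjX₁_inv_mul_conjX₁_eq (hab : a ≠ b) (hcd : c ≠ d)
    (h : (conjX₁ b)⁻¹ * conjX₁ a = (conjX₁ d)⁻¹ * conjX₁ c) : a = c ∧ b = d := by
  rcases hab.lt_or_gt with hab | hba
  · exact eq_and_eq_of_conjX₁_inv_mul_conjX₁_eq_of_lt hab hcd h
  · have h' : (conjX₁ a)⁻¹ * conjX₁ b = (conjX₁ c)⁻¹ * conjX₁ d := by
      simpa only [mul_inv_rev, inv_inv] using congrArg (·⁻¹) h
    exact (eq_and_eq_of_conjX₁_inv_mul_conjX₁_eq_of_lt hba hcd.symm h').symm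

end ThompsonF

theorem statement7_general (w₁ w₂ : ThompsonF) (hw : w₁ ≠ w₂) (i j k l : ℤ)
    (h₁ : x₀ ^ i * x₁ * x₀ ^ (-i) * w₁ = x₀ ^ j * x₁ * x₀ ^ (-j) * w₂)
    (h₂ : x₀ ^ k * x₁ * x₀ ^ (-k) * w₁ = x₀ ^ l * x₁ * x₀ ^ (-l) * w₂) :
    i = k ∧ j = l := by
  have hquot {g h : ThompsonF} (hgh : g * w₁ = h * w₂) : h⁻¹ * g = w₂ * w₁⁻¹ := by
    rw [inv_mul_eq_iff_eq_mul, ← mul_assoc, ← hgh, mul_inv_cancel_right]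
  have hij : i ≠ j := by rintro rfl; exact hw (mul_left_cancel h₁)
  have hkl : k ≠ l := by rintro rfl; exact hw (mul_left_cancel h₂)
  have h := congrArg ThompsonF.toPerm ((hquot h₁).trans (hquot h₂).symm)
  rw [ThompsonF.toPerm_conj_inv_mul_conj, ThompsonF.toPerm_conj_inv_mul_conj] at h
  exact_mod_cast ThompsonF.eq_and_eq_of_conjX₁_inv_mul_conjX₁_eq
    (Int.cast_injective.ne hij) (Int.cast_injective.ne hkl) h

/-- for distinct `w₁, w₂ ∈ F` there is at most one pair `(i, j)` of
positive integers with `x₀ⁱx₁x₀⁻ⁱ w₁ = x₀ʲx₁x₀⁻ʲ w₂`. -/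
theorem statement7 (w₁ w₂ : ThompsonF) (hw : w₁ ≠ w₂) (i j k l : ℤ)
    (hi : 0 < i) (hj : 0 < j) (hk : 0 < k) (hl : 0 < l)
    (h₁ : x₀ ^ i * x₁ * x₀ ^ (-i) * w₁ = x₀ ^ j * x₁ * x₀ ^ (-j) * w₂)
    (h₂ : x₀ ^ k * x₁ * x₀ ^ (-k) * w₁ = x₀ ^ l * x₁ * x₀ ^ (-l) * w₂) :
    i = k ∧ j = l :=
  statement7_general w₁ w₂ hw i j k l h₁ h₂
end

section
/- Let H be a complex Hilbert space and let A, B be bounded linear operators on H such that A B* = 0 (where B* denotes the adjoint of B). Then ‖A + B‖² ≤ ‖A‖² + ‖B‖², where ‖·‖ is the operator norm. -/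
open ContinuousLinearMap in
/-- if `A B* = 0` for bounded operators on a complex Hilbert space,
then `‖A + B‖² ≤ ‖A‖² + ‖B‖²`. -/
theorem statement15 {H : Type*} [NormedAddCommGroup H] [InnerProductSpace ℂ H]
    [CompleteSpace H] (A B : H →L[ℂ] H)
    (h : A ∘L ContinuousLinearMap.adjoint B = 0) :
    ‖A + B‖ ^ 2 ≤ ‖A‖ ^ 2 + ‖B‖ ^ 2 := by
  have na : ∀ T : H →L[ℂ] H, ‖adjoint T‖ = ‖T‖ := fun T => LinearIsometryEquiv.norm_map adjoint T
  have h' : B ∘L adjoint A = 0 := by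
    have := congrArg adjoint h
    rwa [adjoint_comp, adjoint_adjoint, map_zero] at this
  have key : (A + B) ∘L adjoint (A + B) = A ∘L adjoint A + B ∘L adjoint B := by
    rw [map_add]
    simp only [add_comp, comp_add, h, h']
    abel
  have h1 : ‖A + B‖ ^ 2 = ‖(A + B) ∘L adjoint (A + B)‖ := by
    have := norm_adjoint_comp_self (adjoint (A + B))
    rw [adjoint_adjoint] at this
    rw [this, na, sq]
  have h2 : ‖A ∘L adjoint A‖ = ‖A‖ ^ 2 := by
    have := norm_adjoint_comp_self (adjoint A)
    rw [adjoint_adjoint] at this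
    rw [this, na, sq]
  have h3 : ‖B ∘L adjoint B‖ = ‖B‖ ^ 2 := by
    have := norm_adjoint_comp_self (adjoint B)
    rw [adjoint_adjoint] at this
    rw [this, na, sq]
  calc ‖A + B‖ ^ 2 = ‖A ∘L adjoint A + B ∘L adjoint B‖ := by rw [h1, key]
    _ ≤ ‖A ∘L adjoint A‖ + ‖B ∘L adjoint B‖ := norm_add_le _ _
    _ = ‖A‖ ^ 2 + ‖B‖ ^ 2 := by rw [h2, h3]
end

section
/- Let H be a complex Hilbert space, let u be a unitary operator on H, let b be a bounded linear operator on H, and let n be a positive integer. Suppose that uⁱ b u⁻ⁱ b* = 0 for all i = 1, …, n (where b* denotes the adjoint of b). Then ‖∑_{i=1}^n uⁱ b u⁻ⁱ‖² ≤ n ‖b‖², where ‖·‖ is the operator norm. -/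
/-!
Write `aᵢ = uⁱ b u⁻ⁱ`. For `i < j` the cross term `aᵢ aⱼ*` equals `uⁱ (b u^{j-i} b*) u⁻ʲ`, and
`b uᵏ b* = 0` for `1 ≤ k ≤ n` is the adjoint of the hypothesis conjugated back by `uᵏ`; the terms
with `i > j` are adjoints of those with `i < j`. Hence `(∑ aᵢ)(∑ aᵢ)* = ∑ aᵢ aᵢ*`, and the C*-identity
gives `‖∑ aᵢ‖² ≤ ∑ ‖aᵢ‖² = n ‖b‖²`.
-/

open Finset

theorem norm_sum_sq_le_sum_norm_sq_of_mul_star_eq_zero {A ι : Type*} [NonUnitalNormedRing A]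
    [StarRing A] [CStarRing A] (s : Finset ι) (a : ι → A)
    (h : ∀ i ∈ s, ∀ j ∈ s, i ≠ j → a i * star (a j) = 0) :
    ‖∑ i ∈ s, a i‖ ^ 2 ≤ ∑ i ∈ s, ‖a i‖ ^ 2 := by
  have hdiag : (∑ i ∈ s, a i) * star (∑ i ∈ s, a i) = ∑ i ∈ s, a i * star (a i) := by
    rw [star_sum, sum_mul_sum]
    exact sum_congr rfl fun i hi =>
      sum_eq_single_of_mem i hi fun j hj hji => h i hi j hj hji.symm
  calc ‖∑ i ∈ s, a i‖ ^ 2 = ‖∑ i ∈ s, a i * star (a i)‖ := by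
        rw [← hdiag, CStarRing.norm_self_mul_star, sq]
    _ ≤ ∑ i ∈ s, ‖a i * star (a i)‖ := norm_sum_le _ _
    _ = ∑ i ∈ s, ‖a i‖ ^ 2 := by simp only [CStarRing.norm_self_mul_star, sq]

theorem CStarRing.norm_mul_mul_star_of_mem_unitary {A : Type*} [NormedRing A] [StarRing A]
    [CStarRing A] {u : A} (hu : u ∈ unitary A) (b : A) : ‖u * b * star u‖ = ‖b‖ := by
  rw [norm_mul_mem_unitary _ (Unitary.star_mem hu), norm_mem_unitary_mul _ hu]

section Unitary

variable {R : Type*} [Ring R] [StarRing R] {u : R}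

theorem star_pow_mul_pow_of_mem_unitary (hu : u ∈ unitary R) (k : ℕ) : star u ^ k * u ^ k = 1 := by
  rw [← star_pow, Unitary.star_mul_self_of_mem (pow_mem hu k)]

theorem mul_pow_mul_star_eq_zero_of_conj_mul_star_eq_zero (hu : u ∈ unitary R) {b : R} {k : ℕ}
    (h : u ^ k * b * star u ^ k * star b = 0) : b * u ^ k * star b = 0 := by
  have hconj : b * star u ^ k * star b = 0 := by
    calc b * star u ^ k * star b = star u ^ k * (u ^ k * b * star u ^ k * star b) := by
          simp only [← mul_assoc, star_pow_mul_pow_of_mem_unitary hu, one_mul]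
      _ = 0 := by rw [h, mul_zero]
  simpa only [star_mul, star_pow, star_star, star_zero, mul_assoc] using congrArg star hconj

theorem conj_pow_mul_star_conj_pow_add (hu : u ∈ unitary R) (b : R) (i k : ℕ) :
    u ^ i * b * star u ^ i * star (u ^ (i + k) * b * star u ^ (i + k)) =
      u ^ i * (b * u ^ k * star b) * star u ^ (i + k) := by
  simp only [star_mul, star_pow, star_star, mul_assoc]
  rw [pow_add u i k, mul_assoc (u ^ i), ← mul_assoc (star u ^ i) (u ^ i), star_pow_mul_pow_of_mem_unitary hu, one_mul]

end Unitary

theorem statement16_general {H : Type*} [NormedAddCommGroup H] [InnerProductSpace ℂ H]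
    [CompleteSpace H] (u b : H →L[ℂ] H) (hu : u ∈ unitary (H →L[ℂ] H))
    (n : ℕ)
    (h : ∀ i ∈ Finset.Icc 1 n, u ^ i * b * (star u) ^ i * star b = 0) :
    ‖∑ i ∈ Finset.Icc 1 n, u ^ i * b * (star u) ^ i‖ ^ 2 ≤ (n : ℝ) * ‖b‖ ^ 2 := by
  set a : ℕ → H →L[ℂ] H := fun i => u ^ i * b * star u ^ i
  have hlt : ∀ i ∈ Icc 1 n, ∀ j ∈ Icc 1 n, i < j → a i * star (a j) = 0 := by
    intro i _ j hj hij
    obtain ⟨k, rfl⟩ := Nat.exists_eq_add_of_lt hij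
    have hk : k + 1 ∈ Icc 1 n := by simp only [mem_Icc] at hj ⊢; omega
    simp only [a, add_assoc, conj_pow_mul_star_conj_pow_add hu,
      mul_pow_mul_star_eq_zero_of_conj_mul_star_eq_zero hu (h _ hk), mul_zero, zero_mul]
  have hcross : ∀ i ∈ Icc 1 n, ∀ j ∈ Icc 1 n, i ≠ j → a i * star (a j) = 0 := by
    intro i hi j hj hij
    rcases hij.lt_or_gt with hij | hji
    · exact hlt i hi j hj hij
    · simpa only [star_mul, star_star, star_zero] using congrArg star (hlt j hj i hi hji)
  calc ‖∑ i ∈ Icc 1 n, a i‖ ^ 2 ≤ ∑ i ∈ Icc 1 n, ‖a i‖ ^ 2 :=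
        norm_sum_sq_le_sum_norm_sq_of_mul_star_eq_zero _ _ hcross
    _ = n * ‖b‖ ^ 2 := by
        simp [a, CStarRing.norm_mul_mul_star_of_mem_unitary (pow_mem hu _), ← star_pow]

/-- if `u` is a unitary on a complex Hilbert space, `b` a bounded operator
and `uⁱ b u⁻ⁱ b* = 0` for `i = 1, …, n`, then `‖∑_{i=1}^n uⁱ b u⁻ⁱ‖² ≤ n‖b‖²`.
(Here `u⁻ⁱ = (u*)ⁱ` since `u` is unitary.) -/
theorem statement16 {H : Type*} [NormedAddCommGroup H] [InnerProductSpace ℂ H]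
    [CompleteSpace H] (u b : H →L[ℂ] H) (hu : u ∈ unitary (H →L[ℂ] H))
    (n : ℕ) (hn : 0 < n)
    (h : ∀ i ∈ Finset.Icc 1 n, u ^ i * b * (star u) ^ i * star b = 0) :
    ‖∑ i ∈ Finset.Icc 1 n, u ^ i * b * (star u) ^ i‖ ^ 2 ≤ (n : ℝ) * ‖b‖ ^ 2 :=
  statement16_general u b hu n h
end
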